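/- Let x, y be finite words over Σ with xy ≠ yx and let k, l ≥ 1. Then lcs(x y^l, y x^k) = lcs(xy, yx). -/

import Mathlib

/-!
Reversal turns `lcs` into `lcp`, so it suffices to show `lcp (a^k b) (b^l a) = lcp (ab) (ba)`
when `ab ≠ ba`. Let `n = |lcp (ab) (ba)|`; as `ab ≠ ba` have the same length, `n < |a| + |b|`.
For `|a| ≤ i ≤ n` we get `(ab)[i] = b[i - |a|] = (ba)[i - |a|] = (ab)[i - |a|]`, so `ab` has
period `|a|` up to position `n`, and by induction on `k` the word `a^k b = a (a^(k-1) b)` agrees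
with `ab` up to position `n`; symmetrically `b^l a` agrees with `ba`. Finally, `lcp u v` only
depends on the letters of `u` and `v` up to position `|lcp u v|`.
-/

variable {α : Type*} [DecidableEq α]

/-- Longest common prefix of two finite words. -/
def lcp : List α → List α → List α
  | a :: u, b :: v => if a = b then a :: lcp u v else []
  | _, _ => []

/-- Longest common suffix of two finite words. -/
def lcs (u v : List α) : List α := (lcp u.reverse v.reverse).reverse

/-- `wpow x k` is the `k`-fold concatenation `x^k`. -/
def wpow (x : List α) (k : ℕ) : List α := (List.replicate k x).flatten

@[simp] lemma lcp_nil_left (v : List α) : lcp [] v = [] := by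
  cases v <;> rfl

@[simp] lemma lcp_nil_right (u : List α) : lcp u [] = [] := by
  cases u <;> rfl

@[simp] lemma lcp_cons_self (a : α) (u v : List α) : lcp (a :: u) (a :: v) = a :: lcp u v := by
  simp [lcp]

lemma lcp_cons_of_ne {a b : α} (hab : a ≠ b) (u v : List α) : lcp (a :: u) (b :: v) = [] := by
  simp [lcp, hab]

lemma lcp_comm (u v : List α) : lcp u v = lcp v u := by
  induction u generalizing v with
  | nil => simp
  | cons a u ih =>
    rcases v with _ | ⟨b, v⟩
    · simp
    · by_cases hab : a = b
      · subst hab; simp [ih]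
      · rw [lcp_cons_of_ne hab, lcp_cons_of_ne (Ne.symm hab)]

lemma lcp_prefix_left (u v : List α) : lcp u v <+: u := by
  induction u generalizing v with
  | nil => simp
  | cons a u ih =>
    rcases v with _ | ⟨b, v⟩
    · simp
    · by_cases hab : a = b
      · subst hab; simpa using ih v
      · simp [lcp_cons_of_ne hab]

lemma lcp_prefix_right (u v : List α) : lcp u v <+: v :=
  lcp_comm u v ▸ lcp_prefix_left v u

lemma getElem?_eq_of_lt_length_lcp {u v : List α} {i : ℕ} (hi : i < (lcp u v).length) :
    u[i]? = v[i]? := by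
  rw [List.prefix_iff_getElem?.mp (lcp_prefix_left u v) i hi,
    List.prefix_iff_getElem?.mp (lcp_prefix_right u v) i hi]

lemma length_lcp_lt_of_ne {u v : List α} (huv : u ≠ v) (hlen : u.length = v.length) :
    (lcp u v).length < u.length := by
  refine lt_of_le_of_ne (lcp_prefix_left u v).length_le fun h => huv ?_
  have hu : lcp u v = u := (lcp_prefix_left u v).eq_of_length h
  exact (hu ▸ lcp_prefix_right u v).eq_of_length hlen

lemma lcp_congr {u v u' v' : List α}
    (hu : ∀ i ≤ (lcp u v).length, u'[i]? = u[i]?)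
    (hv : ∀ i ≤ (lcp u v).length, v'[i]? = v[i]?) :
    lcp u' v' = lcp u v := by
  induction u generalizing v u' v' with
  | nil =>
    have : u' = [] := by simpa using hu 0
    simp [this]
  | cons a u ih =>
    rcases v with _ | ⟨b, v⟩
    · have : v' = [] := by simpa using hv 0
      simp [this]
    have hu0 : u'.head? = some a := by simpa [List.head?_eq_getElem?] using hu 0 (Nat.zero_le _)
    have hv0 : v'.head? = some b := by simpa [List.head?_eq_getElem?] using hv 0 (Nat.zero_le _)
    obtain ⟨s, rfl⟩ := List.head?_eq_some_iff.mp hu0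
    obtain ⟨t, rfl⟩ := List.head?_eq_some_iff.mp hv0
    by_cases hab : a = b
    · subst hab
      simp only [lcp_cons_self, List.length_cons] at hu hv ⊢
      exact congrArg _ (ih (fun i hi => by simpa using hu (i + 1) (by omega))
        (fun i hi => by simpa using hv (i + 1) (by omega)))
    · rw [lcp_cons_of_ne hab, lcp_cons_of_ne hab]

omit [DecidableEq α] in
lemma wpow_one (x : List α) : wpow x 1 = x := by
  simp [wpow]

omit [DecidableEq α] in
lemma wpow_succ (x : List α) (k : ℕ) : wpow x (k + 1) = x ++ wpow x k := by
  simp [wpow, List.replicate_succ]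

omit [DecidableEq α] in
lemma reverse_wpow (x : List α) (k : ℕ) : (wpow x k).reverse = wpow x.reverse k := by
  simp [wpow, List.reverse_flatten]

section Noncommuting

variable {a b : List α}

lemma getElem?_append_sub_length (hab : a ++ b ≠ b ++ a) {i : ℕ} (hai : a.length ≤ i)
    (hi : i ≤ (lcp (a ++ b) (b ++ a)).length) :
    (a ++ b)[i - a.length]? = (a ++ b)[i]? := by
  have hn := length_lcp_lt_of_ne hab (by simp [add_comm])
  have ha : 0 < a.length := List.length_pos_iff.mpr (by rintro rfl; simp at hab)
  rw [List.length_append] at hn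
  calc (a ++ b)[i - a.length]? = (b ++ a)[i - a.length]? := getElem?_eq_of_lt_length_lcp (by omega)
    _ = b[i - a.length]? := List.getElem?_append_left (by omega)
    _ = (a ++ b)[i]? := (List.getElem?_append_right hai).symm

lemma getElem?_wpow_append (hab : a ++ b ≠ b ++ a) {k : ℕ} (hk : 0 < k) {i : ℕ}
    (hi : i ≤ (lcp (a ++ b) (b ++ a)).length) :
    (wpow a k ++ b)[i]? = (a ++ b)[i]? := by
  induction k, hk using Nat.le_induction generalizing i with
  | base => rw [wpow_one]
  | succ k hk ih =>
    rw [wpow_succ, List.append_assoc]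
    rcases lt_or_ge i a.length with hia | hai
    · rw [List.getElem?_append_left hia, List.getElem?_append_left hia]
    · rw [List.getElem?_append_right hai, ih (by omega), getElem?_append_sub_length hab hai hi]

theorem lcp_wpow_append (hab : a ++ b ≠ b ++ a) {k l : ℕ} (hk : 0 < k) (hl : 0 < l) :
    lcp (wpow a k ++ b) (wpow b l ++ a) = lcp (a ++ b) (b ++ a) :=
  lcp_congr (fun _ hi => getElem?_wpow_append hab hk hi)
    (fun _ hi => getElem?_wpow_append hab.symm hl (lcp_comm (a ++ b) (b ++ a) ▸ hi))

end Noncommuting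

theorem lcs_pow_noncomm (x y : List α) (h : x ++ y ≠ y ++ x)
    (k l : ℕ) (hk : 1 ≤ k) (hl : 1 ≤ l) :
    lcs (x ++ wpow y l) (y ++ wpow x k) = lcs (x ++ y) (y ++ x) := by
  have hrev : y.reverse ++ x.reverse ≠ x.reverse ++ y.reverse := by
    simpa only [List.reverse_append] using List.reverse_injective.ne h
  simp only [lcs, List.reverse_append, reverse_wpow, lcp_wpow_append hrev hl hk]
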